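/- Let A be a Z-graded algebra over a commutative ring K, d an integer, and ⟪-,-⟫ a d-antisymmetric d-graded bibracket on A. Define ⟨a,b⟩ = ⟪a,b⟫' ⟪a,b⟫''. Then for all homogeneous a, b in A, the element ⟨a,b⟩ + (-1)^{(|a|+d)(|b|+d)} ⟨b,a⟩ lies in the submodule [A,A] spanned by graded commutators xy - (-1)^{|x||y|} yx of homogeneous elements. In particular, the associated bracket descends to a (-1)^{(|a|+d)(|b|+d)}-antisymmetric bracket on A/[A,A]. -/

import Mathlib

open scoped TensorProduct

noncomputable section

/-- The sign `(-1)^n`, for `n : ℤ`, as an element of the commutative ring `K`. -/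
def sgn (K : Type*) [CommRing K] (n : ℤ) : K := ((n.negOnePow : ℤ) : K)

variable {K : Type*} [CommRing K] {A : Type*} [Ring A] [Algebra K A]
variable (𝒜 : ℤ → Submodule K A) [GradedAlgebra 𝒜]

/-- The `K`-linear endomorphism of `A` multiplying the degree-`p` component by `(-1)^{p·k}`. -/
def twist (k : ℤ) : A →ₗ[K] A :=
  (DirectSum.toModule K ℤ A fun p => sgn K (p * k) • (𝒜 p).subtype) ∘ₗ
    (DirectSum.decomposeAlgEquiv 𝒜).toLinearMap

/-- The graded flip `P₂₁` of `A ⊗ A`, sending `x' ⊗ x''` (with `x', x''` homogeneous)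
to `(-1)^{|x'||x''|} x'' ⊗ x'`. -/
def gflip : A ⊗[K] A →ₗ[K] A ⊗[K] A :=
  TensorProduct.lift
    ((DirectSum.toModule K ℤ (A →ₗ[K] A ⊗[K] A) fun p =>
        ((LinearMap.llcomp K A A (A ⊗[K] A)).flip (twist 𝒜 p)).comp
          ((TensorProduct.mk K A A).flip.comp (𝒜 p).subtype)) ∘ₗ
      (DirectSum.decomposeAlgEquiv 𝒜).toLinearMap)

/-- The `d`-graded flip `P₂₁,d`, sending `a ⊗ b` (homogeneous) to
`(-1)^{(|a|+d)(|b|+d)} b ⊗ a`. -/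
def P21d (d : ℤ) : A ⊗[K] A →ₗ[K] A ⊗[K] A :=
  sgn K (d * d) • (gflip 𝒜 ∘ₗ TensorProduct.map (twist 𝒜 d) (twist 𝒜 d))

/-- Outer left action of `A` on `A ⊗ A`: `a ⬝ (x' ⊗ x'') = (a x') ⊗ x''`. -/
def outL (a : A) : A ⊗[K] A →ₗ[K] A ⊗[K] A := LinearMap.rTensor A (LinearMap.mulLeft K a)

/-- Outer right action of `A` on `A ⊗ A`: `(x' ⊗ x'') ⬝ b = x' ⊗ (x'' b)`. -/
def outR (b : A) : A ⊗[K] A →ₗ[K] A ⊗[K] A := LinearMap.lTensor A (LinearMap.mulRight K b)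

/-- Inner left action of a homogeneous `a` of degree `p` on `A ⊗ A`:
`a * (x' ⊗ x'') = (-1)^{|a||x'|} x' ⊗ (a x'')`. -/
def innL (p : ℤ) (a : A) : A ⊗[K] A →ₗ[K] A ⊗[K] A :=
  (LinearMap.lTensor A (LinearMap.mulLeft K a)) ∘ₗ (LinearMap.rTensor A (twist 𝒜 p))

/-- Inner right action of a homogeneous `b` of degree `q` on `A ⊗ A`:
`(x' ⊗ x'') * b = (-1)^{|b||x''|} (x' b) ⊗ x''`. -/
def innR (q : ℤ) (b : A) : A ⊗[K] A →ₗ[K] A ⊗[K] A :=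
  (LinearMap.rTensor A (LinearMap.mulRight K b)) ∘ₗ (LinearMap.lTensor A (twist 𝒜 q))

/-- The degree-`n` part `⊕_{i+j=n} A^i ⊗ A^j` of `A ⊗ A`, as the span of
homogeneous pure tensors of total degree `n`. -/
def degSub (n : ℤ) : Submodule K (A ⊗[K] A) :=
  Submodule.span K
    {z | ∃ (i j : ℤ) (x' x'' : A), i + j = n ∧ x' ∈ 𝒜 i ∧ x'' ∈ 𝒜 j ∧ z = x' ⊗ₜ[K] x''}

/-! Antisymmetry gives `F (a ⊗ b) = -s • P₂₁ (F (b ⊗ a))` with `s = (-1)^{(|a|+d)(|b|+d)}`, so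
`⟨a,b⟩ + s ⟨b,a⟩ = s • (mul' z - mul' (P₂₁ z))` for `z = F (b ⊗ a)`. The linear map
`mul' - mul' ∘ P₂₁` sends each homogeneous pure tensor `x ⊗ y` to the graded commutator
`x y - (-1)^{|x||y|} y x`, hence lands in `[A, A]`. -/

def gradedCommutatorSpan : Submodule K A :=
  Submodule.span K
    {z : A | ∃ (p q : ℤ) (u v : A), u ∈ 𝒜 p ∧ v ∈ 𝒜 q ∧ z = u * v - sgn K (p * q) • (v * u)}

lemma sgn_add (m n : ℤ) : sgn K (m + n) = sgn K m * sgn K n := by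
  simp [sgn, Int.negOnePow_add]

variable {𝒜}

lemma twist_apply_of_mem (k : ℤ) {p : ℤ} {x : A} (hx : x ∈ 𝒜 p) :
    twist 𝒜 k x = sgn K (p * k) • x := by
  simp only [twist, LinearMap.comp_apply, AlgEquiv.toLinearMap_apply,
    DirectSum.decomposeAlgEquiv_apply]
  rw [DirectSum.decompose_of_mem 𝒜 hx, ← DirectSum.lof_eq_of K, DirectSum.toModule_lof]
  rfl

lemma gflip_tmul_of_mem {p q : ℤ} {x y : A} (hx : x ∈ 𝒜 p) (hy : y ∈ 𝒜 q) :
    gflip 𝒜 (x ⊗ₜ[K] y) = sgn K (p * q) • (y ⊗ₜ[K] x) := by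
  simp only [gflip, TensorProduct.lift.tmul, LinearMap.comp_apply, AlgEquiv.toLinearMap_apply,
    DirectSum.decomposeAlgEquiv_apply]
  rw [DirectSum.decompose_of_mem 𝒜 hx, ← DirectSum.lof_eq_of K, DirectSum.toModule_lof]
  simp only [LinearMap.comp_apply, Submodule.subtype_apply, LinearMap.llcomp_apply,
    LinearMap.flip_apply]
  rw [twist_apply_of_mem p hy, map_smul, mul_comm q p]
  rfl

lemma P21d_tmul_of_mem (d : ℤ) {p q : ℤ} {x y : A} (hx : x ∈ 𝒜 p) (hy : y ∈ 𝒜 q) :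
    P21d 𝒜 d (x ⊗ₜ[K] y) = sgn K ((p + d) * (q + d)) • (y ⊗ₜ[K] x) := by
  simp only [P21d, LinearMap.smul_apply, LinearMap.comp_apply, TensorProduct.map_tmul]
  rw [twist_apply_of_mem d hx, twist_apply_of_mem d hy, TensorProduct.smul_tmul_smul, map_smul,
    gflip_tmul_of_mem hx hy, smul_smul, smul_smul,
    show (p + d) * (q + d) = d * d + (p * d + (q * d + p * q)) by ring, sgn_add, sgn_add, sgn_add]
  ring_nf

lemma mul'_sub_mul'_gflip_mem_gradedCommutatorSpan (z : A ⊗[K] A) :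
    LinearMap.mul' K A z - LinearMap.mul' K A (gflip 𝒜 z) ∈ gradedCommutatorSpan 𝒜 := by
  set f := LinearMap.mul' K A - LinearMap.mul' K A ∘ₗ gflip 𝒜
  change f z ∈ _
  induction z using TensorProduct.induction_on with
  | zero => simp
  | tmul x y =>
    induction x using DirectSum.Decomposition.inductionOn 𝒜 with
    | zero => simp
    | @homogeneous p x =>
      induction y using DirectSum.Decomposition.inductionOn 𝒜 with
      | zero => simp
      | @homogeneous q y =>
        simp only [f, LinearMap.sub_apply, LinearMap.comp_apply,
          gflip_tmul_of_mem x.2 y.2, map_smul, LinearMap.mul'_apply]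
        exact Submodule.subset_span ⟨p, q, x, y, x.2, y.2, rfl⟩
      | add y₁ y₂ h₁ h₂ => simpa only [TensorProduct.tmul_add, map_add] using add_mem h₁ h₂
    | add x₁ x₂ h₁ h₂ => simpa only [TensorProduct.add_tmul, map_add] using add_mem h₁ h₂
  | add z₁ z₂ h₁ h₂ => simpa only [map_add] using add_mem h₁ h₂

lemma apply_tmul_eq_neg_smul_gflip {d : ℤ} {F : A ⊗[K] A →ₗ[K] A ⊗[K] A}
    (hanti : gflip 𝒜 ∘ₗ F ∘ₗ P21d 𝒜 d = -F) {p q : ℤ} {a b : A} (ha : a ∈ 𝒜 p) (hb : b ∈ 𝒜 q) :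
    F (a ⊗ₜ[K] b) = -(sgn K ((p + d) * (q + d)) • gflip 𝒜 (F (b ⊗ₜ[K] a))) := by
  have h := LinearMap.congr_fun hanti (a ⊗ₜ[K] b)
  simp only [LinearMap.comp_apply, LinearMap.neg_apply, P21d_tmul_of_mem d ha hb,
    map_smul] at h
  rw [h, neg_neg]

variable (𝒜)

theorem stmt6 (d : ℤ) (F : A ⊗[K] A →ₗ[K] A ⊗[K] A)
    (hanti : gflip 𝒜 ∘ₗ F ∘ₗ P21d 𝒜 d = -F) :
    ∀ (pa pb : ℤ) (a b : A), a ∈ 𝒜 pa → b ∈ 𝒜 pb →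
      LinearMap.mul' K A (F (a ⊗ₜ[K] b)) +
          sgn K ((pa + d) * (pb + d)) • LinearMap.mul' K A (F (b ⊗ₜ[K] a)) ∈
        Submodule.span K
          {z : A | ∃ (p q : ℤ) (u v : A), u ∈ 𝒜 p ∧ v ∈ 𝒜 q ∧
            z = u * v - sgn K (p * q) • (v * u)} := by
  intro pa pb a b ha hb
  rw [apply_tmul_eq_neg_smul_gflip hanti ha hb, map_neg, map_smul, ← sub_eq_neg_add, ← smul_sub]
  exact Submodule.smul_mem _ _ (mul'_sub_mul'_gflip_mem_gradedCommutatorSpan _)
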